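/- arXiv:1904.04903 — 4 statements merged into one kernel-verified Lean document; each statement's English description precedes it below -/
import Mathlib

section
/- The sequence T_d of labeled trees on d nodes, defined by T_1 = 1 and the recursion (d-1) T_d = (1/2) Σ_{a+b=d, a,b≥1} a·b·binom(d,a)·T_a·T_b, satisfies T_d = d^{d-2} for all d ≥ 1. -/
/-!
Abel's identity `∑ₖ C(n,k) x (x+k)^(k-1) y (y+n-k)^(n-k-1) = (x+y) (x+y+n)^(n-1)` (the factor
`x (x+k)^(k-1)` read as `1` at `k = 0`, likewise for `y`) has `xy`-coefficient
`∑_{0<k<n} C(n,k) k^(k-1) (n-k)^(n-k-1)` on the left and `2(n-1) n^(n-2)` on the right.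
Hence `d ↦ d^(d-2)` satisfies the recursion, and the recursion determines `T` by strong induction.
-/

open Polynomial Finset

section Abel

variable {R : Type*} [CommRing R]

/-- The Abel polynomial `x (x + k) ^ (k - 1)`. -/
def abelTerm (x : R) : ℕ → R
  | 0 => 1
  | k + 1 => x * (x + (k + 1 : ℕ)) ^ k

lemma abelTerm_of_ne_zero (x : R) {k : ℕ} (hk : k ≠ 0) :
    abelTerm x k = x * (x + k) ^ (k - 1) := by
  obtain ⟨j, rfl⟩ := Nat.exists_eq_succ_of_ne_zero hk
  rfl

lemma abelTerm_mul_add_pow (x : R) {k n : ℕ} (hk : k ≤ n + 1) :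
    abelTerm x k * (x + k) ^ (n + 1 - k) = x * (x + k) ^ n := by
  rcases k with _ | j
  · simp [abelTerm, pow_succ']
  · rw [abelTerm, mul_assoc, ← pow_add]
    congr 3
    omega

lemma abelTerm_eq_sub (y : R) (m : ℕ) :
    abelTerm y m = (y + m) ^ m - m * (y + m) ^ (m - 1) := by
  rcases m with _ | j
  · simp [abelTerm]
  · simp only [abelTerm, Nat.add_sub_cancel, pow_succ]
    ring

lemma sum_range_succ_choose_mul_sub_mul (f : ℕ → R) (n : ℕ) :
    ∑ k ∈ range (n + 2), ((n + 1).choose k * ((n + 1 - k : ℕ) : R)) * f k =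
      (n + 1) * ∑ k ∈ range (n + 1), n.choose k * f k := by
  rw [sum_range_succ, Nat.sub_self, Nat.cast_zero, mul_zero, zero_mul, add_zero, mul_sum]
  refine sum_congr rfl fun k _ => ?_
  rw [← Nat.cast_mul, ← Nat.choose_mul_succ_eq]
  push_cast
  ring

lemma sum_range_neg_one_pow_mul_choose_mul_add_pow_eq_zero {j n : ℕ} (h : j < n) (x : R) :
    ∑ k ∈ range (n + 1), (-1) ^ (n - k) * n.choose k * (x + k) ^ j = 0 := by
  have := congrFun (fwdDiff_iter_pow_eq_zero_of_lt (R := R) h) x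
  rw [fwdDiff_iter_eq_sum_shift] at this
  simpa [zsmul_eq_mul] using this

/-- Abel's identity. Differentiating reduces it to `n - 1`; at `X = 0` the left side is `x` times
an `n`-th forward difference of `t ↦ t ^ (n - 1)`, which vanishes. -/
lemma sum_choose_mul_abelTerm_mul_X_sub_pow [IsAddTorsionFree R] (x : R) (n : ℕ) :
    ∑ k ∈ range (n + 1), (n.choose k : R[X]) * C (abelTerm x k) * (X - C (x + k)) ^ (n - k) = X ^ n := by
  induction n with
  | zero => simp [abelTerm]
  | succ n ih =>
    rw [← sub_eq_zero]
    set D := ∑ k ∈ range (n + 2), ((n + 1).choose k : R[X]) * C (abelTerm x k) *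
      (X - C (x + k)) ^ (n + 1 - k) - X ^ (n + 1)
    have hD' : derivative D = 0 := by
      have hterm : ∀ k ∈ range (n + 2), derivative (((n + 1).choose k : R[X]) * C (abelTerm x k) *
          (X - C (x + k)) ^ (n + 1 - k)) = (((n + 1).choose k : R[X]) * ((n + 1 - k : ℕ) : R[X])) *
            (C (abelTerm x k) * (X - C (x + k)) ^ (n - k)) := fun k _ => by
        rw [mul_assoc, derivative_natCast_mul, derivative_C_mul, derivative_X_sub_C_pow,
          C_eq_natCast, Nat.sub_sub, Nat.add_sub_add_right]
        ring
      rw [derivative_sub, derivative_sum, sum_congr rfl hterm, sum_range_succ_choose_mul_sub_mul]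
      simp only [← mul_assoc, ih, derivative_X_pow, C_eq_natCast]
      push_cast
      ring
    have hD0 : D.eval 0 = 0 := by
      have hterm : ∀ k ∈ range (n + 2), eval 0 (((n + 1).choose k : R[X]) * C (abelTerm x k) *
          (X - C (x + k)) ^ (n + 1 - k)) = x * ((-1) ^ (n + 1 - k) * (n + 1).choose k * (x + k) ^ n) :=
        fun k hk => by
          simp only [eval_mul, eval_natCast, eval_C, eval_pow, eval_sub, eval_X, zero_sub]
          rw [neg_pow]
          linear_combination ((-1) ^ (n + 1 - k) * ((n + 1).choose k : R)) *
            abelTerm_mul_add_pow x (Nat.lt_succ_iff.mp (mem_range.mp hk))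
      rw [eval_sub, eval_finsetSum, sum_congr rfl hterm, ← mul_sum,
        sum_range_neg_one_pow_mul_choose_mul_add_pow_eq_zero n.lt_succ_self]
      simp
    show D = 0
    rw [eq_C_of_derivative_eq_zero hD', coeff_zero_eq_eval_zero, hD0, C_0]

lemma abel_identity [IsAddTorsionFree R] (x z : R) (n : ℕ) :
    ∑ k ∈ range (n + 1), n.choose k * abelTerm x k * (z - (x + k)) ^ (n - k) = z ^ n := by
  simpa [eval_finsetSum] using congrArg (eval z) (sum_choose_mul_abelTerm_mul_X_sub_pow x n)

lemma sum_choose_mul_abelTerm_mul_abelTerm [IsAddTorsionFree R] (x y : R) (n : ℕ) :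
    ∑ k ∈ range (n + 2), (n + 1).choose k * abelTerm x k * abelTerm y (n + 1 - k) =
      (x + y) * (x + y + (n + 1)) ^ n := by
  set z := x + y + (n + 1)
  have hterm : ∀ k ∈ range (n + 2), (n + 1).choose k * abelTerm x k * abelTerm y (n + 1 - k) =
      (n + 1).choose k * abelTerm x k * (z - (x + k)) ^ (n + 1 - k) -
        ((n + 1).choose k * ((n + 1 - k : ℕ) : R)) * (abelTerm x k * (z - (x + k)) ^ (n - k)) :=
    fun k hk => by
      have hy : y + ((n + 1 - k : ℕ) : R) = z - (x + k) := by
        rw [Nat.cast_sub (Nat.lt_succ_iff.mp (mem_range.mp hk))]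
        push_cast
        ring
      rw [abelTerm_eq_sub y, hy, Nat.sub_sub, Nat.add_sub_add_right]
      ring
  rw [sum_congr rfl hterm, sum_sub_distrib, abel_identity, sum_range_succ_choose_mul_sub_mul]
  simp only [← mul_assoc, abel_identity]
  ring

end Abel

lemma sum_Ioo_choose_mul_pow_mul_pow (n : ℕ) :
    ∑ k ∈ Ioo 0 n, n.choose k * k ^ (k - 1) * (n - k) ^ (n - k - 1) = 2 * ((n - 1) * n ^ (n - 2)) := by
  obtain hn | hn := Nat.lt_or_ge n 2
  · interval_cases n <;> rfl
  obtain ⟨m, rfl⟩ := Nat.exists_eq_add_of_le' hn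
  set P : ℤ[X] := ∑ k ∈ Ioo 0 (m + 2), ((m + 2).choose k : ℤ[X]) *
    (X + (k : ℤ[X])) ^ (k - 1) * (X + ((m + 2 - k : ℕ) : ℤ[X])) ^ (m + 2 - k - 1)
  have hsplit : 2 * (X * (X + ((m + 2 : ℕ) : ℤ[X])) ^ (m + 1)) + X ^ 2 * P =
      (X + X : ℤ[X]) * (X + X + (((m + 1 : ℕ) : ℤ[X]) + 1)) ^ (m + 1) := by
    rw [← sum_choose_mul_abelTerm_mul_abelTerm, sum_range_succ, range_eq_Ico,
      sum_eq_sum_Ico_succ_bot (by omega), Ico_add_one_left_eq_Ioo]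
    have hmid : ∀ k ∈ Ioo 0 (m + 2), ((m + 1 + 1).choose k : ℤ[X]) * abelTerm X k *
        abelTerm X (m + 1 + 1 - k) = X ^ 2 * (((m + 2).choose k : ℤ[X]) *
          (X + (k : ℤ[X])) ^ (k - 1) * (X + ((m + 2 - k : ℕ) : ℤ[X])) ^ (m + 2 - k - 1)) :=
      fun k hk => by
        obtain ⟨hk0, hkn⟩ := mem_Ioo.mp hk
        rw [abelTerm_of_ne_zero X hk0.ne', abelTerm_of_ne_zero X (by omega : m + 1 + 1 - k ≠ 0)]
        ring
    rw [sum_congr rfl hmid, ← mul_sum]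
    simp only [Nat.cast_add, Nat.cast_ofNat, Nat.choose_zero_right, Nat.cast_one, abelTerm, mul_one,
      tsub_zero, one_mul, Nat.choose_self, tsub_self, P]
    ring
  have hcancel : 2 * (X + ((m + 2 : ℕ) : ℤ[X])) ^ (m + 1) + X * P =
      2 * (2 * X + ((m + 2 : ℕ) : ℤ[X])) ^ (m + 1) :=
    mul_left_cancel₀ X_ne_zero (by push_cast at hsplit ⊢; linear_combination hsplit)
  -- the coefficient of `X`, i.e. the `X ^ 2`-coefficient of `hsplit`
  have := congrArg (fun p => (derivative p).eval 0) hcancel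
  simp only [Nat.cast_add, Nat.cast_ofNat, derivative_add, derivative_mul, derivative_ofNat, zero_mul,
    derivative_pow, Nat.cast_one, eq_intCast, Int.cast_add, Int.cast_natCast, Int.cast_one,
    add_tsub_cancel_right, derivative_X, derivative_natCast, add_zero, mul_one, zero_add, one_mul,
    map_sum, map_natCast, eval_add, eval_mul, eval_ofNat, eval_natCast, eval_one, eval_pow, eval_X,
    eval_finsetSum, mul_zero, P] at this
  rw [show m + 2 - 1 = m + 1 by omega, show m + 2 - 2 = m by omega]
  apply Nat.cast_injective (R := ℤ)
  push_cast
  linear_combination this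

lemma mul_pow_sub_two_eq_pow_sub_one {m : ℕ} (hm : m ≠ 0) : m * m ^ (m - 2) = m ^ (m - 1) := by
  obtain rfl | hm2 : m = 1 ∨ 2 ≤ m := by omega
  · rfl
  · rw [show m - 2 = m - 1 - 1 by omega, mul_pow_sub_one (by omega)]

/-- Cayley's formula: the tree numbers `T d` determined by `T 1 = 1` and the
edge-elimination recursion `2(d-1) T d = ∑_{a+b=d, a,b≥1} a b C(d,a) T a T b`
satisfy `T d = d^(d-2)`. -/
theorem tree_count_eq_cayley (T : ℕ → ℕ) (h1 : T 1 = 1)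
    (hrec : ∀ d, 2 ≤ d →
      2 * ((d - 1) * T d) =
        ∑ a ∈ Finset.Ioo 0 d, a * (d - a) * Nat.choose d a * T a * T (d - a)) :
    ∀ d, 1 ≤ d → T d = d ^ (d - 2) := by
  intro d
  induction d using Nat.strong_induction_on with
  | _ d ih =>
    intro hd
    obtain rfl | hd2 : d = 1 ∨ 2 ≤ d := by omega
    · simp [h1]
    have hsum : ∑ a ∈ Ioo 0 d, a * (d - a) * d.choose a * T a * T (d - a) =
        ∑ a ∈ Ioo 0 d, d.choose a * a ^ (a - 1) * (d - a) ^ (d - a - 1) :=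
      sum_congr rfl fun a ha => by
        obtain ⟨ha0, had⟩ := mem_Ioo.mp ha
        rw [ih a had ha0, ih (d - a) (by omega) (by omega),
          ← mul_pow_sub_two_eq_pow_sub_one ha0.ne', ← mul_pow_sub_two_eq_pow_sub_one (by omega)]
        ring
    have h := hrec d hd2
    rw [hsum, sum_Ioo_choose_mul_pow_mul_pow d, ← mul_assoc, ← mul_assoc] at h
    exact Nat.eq_of_mul_eq_mul_left (by omega) h
end

section
/- The sequence T_d = d^{d-2} satisfies the recursion 2(d-1)·d^{d-2} = Σ_{a+b=d, a,b≥1} a·b·binom(d,a)·a^{a-2}·b^{b-2} for all d ≥ 2. -/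
/-!
For `d ≥ 3` put `a = i + 1`, `b = j + 1`, `n = d - 2`. Since `a b C(d, a) = d (d - 1) C(n, i)`,
the right-hand side is `d (d - 1)` times the Hurwitz sum
`∑_{i+j=n} C(n, i) x (x + i)^(i-1) y (y + j)^(j-1)` at `x = y = 1`, and Hurwitz's identity
evaluates it to `(x + y) (x + y + n)^(n-1) = 2 d^(d-3)`.

Hurwitz's identity follows from Abel's identity
`∑_{i+j=n} C(n, i) x (x + i)^(i-1) (y + j)^j = (x + y + n)^n`
via `y (y + j)^(j-1) = (y + j)^j - j (y + j)^(j-1)`. Abel's identity is proved by induction on `n`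
as a polynomial identity in `y`: differentiating in `y` reduces it to the case `(n - 1, y + 1)`,
and at `y = -x - n` both sides vanish, the left one because it is `x` times an `n`-th finite
difference of a polynomial of degree `n - 1`.
-/

open Finset Polynomial

theorem Nat.choose_succ_mul_succ_of_add_eq {i j n : ℕ} (h : i + j = n) :
    (n + 1).choose i * (j + 1) = (n + 1) * n.choose i := by
  subst h
  rw [show i + j + 1 = i + (j + 1) by ring, Nat.choose_symm_add, Nat.choose_symm_add,
    ← add_assoc, ← Nat.add_one_mul_choose_eq]

theorem Finset.Nat.sum_antidiagonal_succ_choose_mul_snd {R : Type*} [CommSemiring R] (n : ℕ)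
    (f : ℕ → ℕ → R) :
    ∑ p ∈ antidiagonal (n + 1), ((n + 1).choose p.1 * p.2 : R) * f p.1 p.2 =
      (n + 1) * ∑ p ∈ antidiagonal n, (n.choose p.1 : R) * f p.1 (p.2 + 1) := by
  rw [Nat.sum_antidiagonal_succ', mul_sum]
  simp only [Nat.cast_zero, mul_zero, zero_mul, zero_add]
  refine sum_congr rfl fun p hp => ?_
  have h := Nat.choose_succ_mul_succ_of_add_eq (mem_antidiagonal.mp hp)
  rw [← mul_assoc]
  exact_mod_cast congrArg (fun m : ℕ => (m : R) * f p.1 (p.2 + 1)) h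

theorem Finset.Nat.sum_Ioo_zero_eq_sum_antidiagonal {M : Type*} [AddCommMonoid M] (n : ℕ)
    (f : ℕ → ℕ → M) :
    ∑ a ∈ Ioo 0 (n + 2), f a (n + 2 - a) = ∑ p ∈ antidiagonal n, f (p.1 + 1) (p.2 + 1) := by
  rw [Nat.sum_antidiagonal_eq_sum_range_succ (fun i j => f (i + 1) (j + 1))]
  refine sum_nbij' (· - 1) (· + 1) ?_ ?_ ?_ (fun _ _ => rfl) ?_ <;>
    intro a ha <;> simp only [mem_Ioo, mem_range] at ha ⊢
  all_goals first | omega | (congr 1 <;> omega)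

theorem Polynomial.eq_of_derivative_eq_of_eval_eq {R : Type*} [CommRing R] [IsAddTorsionFree R]
    {p q : R[X]} (a : R) (hd : derivative p = derivative q) (ha : p.eval a = q.eval a) :
    p = q := by
  rw [← sub_eq_zero, ← derivative_sub] at hd
  rw [← sub_eq_zero, eq_C_of_derivative_eq_zero hd, C_eq_zero]
  have := congrArg (eval a) (eq_C_of_derivative_eq_zero hd)
  rwa [eval_sub, ha, sub_self, eval_C, eq_comm] at this

section Abel

variable {R : Type*} [CommRing R]

def abelCoeff (x : R) : ℕ → R
  | 0 => 1
  | k + 1 => x * (x + (k + 1 : ℕ)) ^ k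

theorem abelCoeff_mul_pow_of_add_eq (x : R) {i j n : ℕ} (h : i + j = n + 1) :
    abelCoeff x i * (x + i) ^ j = x * (x + i) ^ n := by
  cases i with
  | zero => rw [zero_add] at h; simp [abelCoeff, h, pow_succ']
  | succ k => rw [abelCoeff, mul_assoc, ← pow_add]; congr 2; omega

theorem abelCoeff_eq_pow_sub (y : R) (j : ℕ) :
    abelCoeff y j = (y + j) ^ j - j * (y + j) ^ (j - 1) := by
  cases j with
  | zero => simp [abelCoeff]
  | succ k => rw [abelCoeff, Nat.add_sub_cancel, pow_succ']; ring

theorem abelCoeff_one (i : ℕ) : abelCoeff (1 : R) i = ((i + 1) ^ (i - 1) : ℕ) := by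
  cases i with
  | zero => simp [abelCoeff]
  | succ k => simp [abelCoeff, add_comm]

theorem sum_antidiagonal_choose_mul_abelCoeff_mul_neg_pow (x : R) (n : ℕ) :
    ∑ p ∈ antidiagonal (n + 1), ((n + 1).choose p.1 : R) * abelCoeff x p.1 * (-(x + p.1)) ^ p.2
      = 0 := by
  have hΔ := congrFun (fwdDiff_iter_pow_eq_zero_of_lt (R := R) (Nat.lt_succ_self n)) x
  rw [fwdDiff_iter_eq_sum_shift, ← Nat.sum_antidiagonal_eq_sum_range_succ
    (fun i j => ((-1 : ℤ) ^ j * (n + 1).choose i) • (x + i • (1 : R)) ^ n)] at hΔ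
  calc _ = x * ∑ p ∈ antidiagonal (n + 1),
          ((-1 : ℤ) ^ p.2 * (n + 1).choose p.1) • (x + p.1 • (1 : R)) ^ n := by
        rw [mul_sum]
        refine sum_congr rfl fun p hp => ?_
        rw [neg_pow]
        simp only [nsmul_eq_mul, mul_one, zsmul_eq_mul, Int.cast_mul, Int.cast_pow,
          Int.cast_neg, Int.cast_one, Int.cast_natCast]
        linear_combination ((-1) ^ p.2 * ((n + 1).choose p.1 : R)) *
          abelCoeff_mul_pow_of_add_eq x (mem_antidiagonal.mp hp)
    _ = 0 := by rw [hΔ, Pi.zero_apply, mul_zero]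

noncomputable def abelPoly (x y : R) (n : ℕ) : R[X] :=
  ∑ p ∈ antidiagonal n, (n.choose p.1 : R[X]) * C (abelCoeff x p.1) * (X + C (y + p.2)) ^ p.2

theorem derivative_abelPoly (x y : R) (n : ℕ) :
    derivative (abelPoly x y (n + 1)) = (n + 1) * abelPoly x (y + 1) n := by
  calc derivative (abelPoly x y (n + 1))
      _ = ∑ p ∈ antidiagonal (n + 1), ((n + 1).choose p.1 * p.2 : R[X]) *
            (C (abelCoeff x p.1) * (X + C (y + p.2)) ^ (p.2 - 1)) := by
        rw [abelPoly, derivative_sum]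
        refine sum_congr rfl fun p _ => ?_
        simp only [derivative_mul, derivative_natCast, derivative_C, derivative_X_add_C_pow,
          map_natCast]
        ring
      _ = (n + 1) * abelPoly x (y + 1) n := by
        rw [Nat.sum_antidiagonal_succ_choose_mul_snd n
          (fun i j => C (abelCoeff x i) * (X + C (y + j)) ^ (j - 1)), abelPoly]
        refine congrArg _ (sum_congr rfl fun p _ => ?_)
        rw [Nat.add_sub_cancel, Nat.cast_succ, add_comm (p.2 : R) 1, ← add_assoc, mul_assoc]

theorem eval_abelPoly_neg (x y : R) (n : ℕ) :
    (abelPoly x y (n + 1)).eval (-(x + y + (n + 1 : ℕ))) = 0 := by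
  have hroot : ∀ p ∈ antidiagonal (n + 1),
      -(x + y + (n + 1 : ℕ)) + (y + p.2) = -(x + p.1) := fun p hp => by
    rw [← mem_antidiagonal.mp hp]; push_cast; ring
  simp only [abelPoly, eval_finsetSum, eval_mul, eval_natCast, eval_C, eval_pow, eval_add, eval_X]
  rw [sum_congr rfl fun p hp => by rw [hroot p hp],
    sum_antidiagonal_choose_mul_abelCoeff_mul_neg_pow]

theorem abelPoly_eq [IsAddTorsionFree R] (x y : R) (n : ℕ) :
    abelPoly x y n = (X + C (x + y + n)) ^ n := by
  induction n generalizing y with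
  | zero => simp [abelPoly, abelCoeff]
  | succ n ih =>
    refine eq_of_derivative_eq_of_eval_eq (-(x + y + (n + 1 : ℕ))) ?_ ?_
    · rw [derivative_abelPoly, ih, derivative_X_add_C_pow, Nat.add_sub_cancel, map_natCast]
      push_cast
      ring_nf
    · rw [eval_abelPoly_neg, eval_pow, eval_add, eval_X, eval_C, neg_add_cancel,
        zero_pow n.succ_ne_zero]

theorem sum_antidiagonal_choose_mul_abelCoeff_mul_pow [IsAddTorsionFree R] (x y : R) (n : ℕ) :
    ∑ p ∈ antidiagonal n, (n.choose p.1 : R) * abelCoeff x p.1 * (y + p.2) ^ p.2 =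
      (x + y + n) ^ n := by
  simpa [abelPoly, eval_finsetSum] using congrArg (eval 0) (abelPoly_eq x y n)

theorem sum_antidiagonal_choose_mul_abelCoeff_mul_abelCoeff [IsAddTorsionFree R]
    (x y : R) (n : ℕ) :
    ∑ p ∈ antidiagonal (n + 1), ((n + 1).choose p.1 : R) * abelCoeff x p.1 * abelCoeff y p.2 =
      (x + y) * (x + y + (n + 1 : ℕ)) ^ n := by
  have hsplit : ∑ p ∈ antidiagonal (n + 1),
      ((n + 1).choose p.1 : R) * abelCoeff x p.1 * abelCoeff y p.2 =
        ∑ p ∈ antidiagonal (n + 1),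
            ((n + 1).choose p.1 : R) * abelCoeff x p.1 * (y + p.2) ^ p.2 -
        ∑ p ∈ antidiagonal (n + 1), ((n + 1).choose p.1 * p.2 : R) *
          (abelCoeff x p.1 * (y + p.2) ^ (p.2 - 1)) := by
    rw [← sum_sub_distrib]
    refine sum_congr rfl fun p _ => ?_
    rw [abelCoeff_eq_pow_sub y]
    ring
  have hshift : ∀ p : ℕ × ℕ, abelCoeff x p.1 * (y + (p.2 + 1 : ℕ)) ^ (p.2 + 1 - 1) =
      abelCoeff x p.1 * (y + 1 + p.2) ^ p.2 := fun p => by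
    rw [Nat.add_sub_cancel]; push_cast; ring_nf
  rw [hsplit, sum_antidiagonal_choose_mul_abelCoeff_mul_pow,
    Nat.sum_antidiagonal_succ_choose_mul_snd n (fun i j => abelCoeff x i * (y + j) ^ (j - 1))]
  simp only [hshift, ← mul_assoc, sum_antidiagonal_choose_mul_abelCoeff_mul_pow]
  push_cast
  ring

end Abel

theorem sum_antidiagonal_choose_mul_succ_pow_mul_succ_pow (n : ℕ) :
    ∑ p ∈ antidiagonal (n + 1),
        (n + 1).choose p.1 * (p.1 + 1) ^ (p.1 - 1) * (p.2 + 1) ^ (p.2 - 1) =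
      2 * (n + 3) ^ n := by
  have h := sum_antidiagonal_choose_mul_abelCoeff_mul_abelCoeff (1 : ℤ) 1 n
  simp only [abelCoeff_one] at h
  exact_mod_cast h.trans
    (by push_cast; ring : ((1 : ℤ) + 1) * (1 + 1 + (n + 1 : ℕ)) ^ n = 2 * ((n : ℤ) + 3) ^ n)

theorem Nat.choose_add_two_succ_mul_of_add_eq {i j n : ℕ} (h : i + j = n) :
    (n + 2).choose (i + 1) * ((i + 1) * (j + 1)) = (n + 2) * (n + 1) * n.choose i := by
  rw [← mul_assoc, ← Nat.add_one_mul_choose_eq, mul_assoc, Nat.choose_succ_mul_succ_of_add_eq h]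
  ring

/-- The sequence `T d = d^(d-2)` satisfies the tree recursion
`2(d-1) d^(d-2) = ∑_{a+b=d, a,b≥1} a b C(d,a) a^(a-2) b^(b-2)` for `d ≥ 2`. -/
theorem cayley_satisfies_tree_recursion (d : ℕ) (hd : 2 ≤ d) :
    2 * (d - 1) * d ^ (d - 2) =
      ∑ a ∈ Finset.Ioo 0 d,
        a * (d - a) * Nat.choose d a * a ^ (a - 2) * (d - a) ^ (d - a - 2) := by
  obtain ⟨n, rfl⟩ := Nat.exists_eq_add_of_le' hd
  rcases n with _ | n
  · decide
  rw [Nat.sum_Ioo_zero_eq_sum_antidiagonal (n + 1)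
    fun a b => a * b * (n + 1 + 2).choose a * a ^ (a - 2) * b ^ (b - 2)]
  have hterm : ∀ p ∈ antidiagonal (n + 1),
      (p.1 + 1) * (p.2 + 1) * (n + 1 + 2).choose (p.1 + 1) * (p.1 + 1) ^ (p.1 + 1 - 2) *
          (p.2 + 1) ^ (p.2 + 1 - 2) =
        (n + 3) * (n + 2) * ((n + 1).choose p.1 * (p.1 + 1) ^ (p.1 - 1) * (p.2 + 1) ^ (p.2 - 1)) :=
    fun p hp => by
      have hchoose := Nat.choose_add_two_succ_mul_of_add_eq (mem_antidiagonal.mp hp)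
      rw [show p.1 + 1 - 2 = p.1 - 1 by omega, show p.2 + 1 - 2 = p.2 - 1 by omega]
      linear_combination (p.1 + 1) ^ (p.1 - 1) * (p.2 + 1) ^ (p.2 - 1) * hchoose
  rw [sum_congr rfl hterm, ← mul_sum, sum_antidiagonal_choose_mul_succ_pow_mul_succ_pow,
    show n + 1 + 2 - 1 = n + 2 by omega, show n + 1 + 2 - 2 = n + 1 by omega]
  ring
end

section
/- The generating function y(x) = Σ_{d≥1} T_d x^d/(d-1)! of labeled trees satisfies the differential equation (x² ∘ d/dx ∘ (1/x)) y = (1/2) x (d/dx) y², equivalently x·y' - y = x·y·y' as formal power series. -/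
/-!
Comparing coefficients of `x^(n+1)` in the exponential generating functions, the equation
`x y' - y = x (y y')` reads `n (n+1)^(n-1) = ∑_{i+j=n} C(n,i) i^(i-1) (j+1)^j`. This is the
coefficient of `x` in Abel's identity `∑_{i+j=n} C(n,i) A_i(x) (y+j)^j = (x+y+n)^n` at `y = 1`,
where `A_i(x) = x (x+i)^(i-1)` are the Abel polynomials. Abel's identity follows by induction on
`n`: since `A_(i+1)' = (i+1) A_i(x+1)`, both sides have the same derivative in `x`, and they
agree at `x = 0`.
-/

open Finset
open scoped Nat

namespace Polynomial

variable {R : Type*} [CommRing R]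

noncomputable def abelPoly : ℕ → R[X]
  | 0 => 1
  | n + 1 => X * (X + C ((n : R) + 1)) ^ n

@[simp]
theorem abelPoly_zero : (abelPoly 0 : R[X]) = 1 := rfl

theorem abelPoly_succ (n : ℕ) : (abelPoly (n + 1) : R[X]) = X * (X + C ((n : R) + 1)) ^ n := rfl

theorem derivative_abelPoly_succ (n : ℕ) :
    derivative (abelPoly (n + 1) : R[X]) = C ((n : R) + 1) * (abelPoly n).comp (X + 1) := by
  cases n with
  | zero => simp [abelPoly_succ]
  | succ n =>
    rw [abelPoly_succ, abelPoly_succ, derivative_mul, derivative_X, derivative_X_add_C_pow,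
      mul_comp, X_comp, pow_comp, add_comp, X_comp, C_comp]
    simp only [Nat.add_sub_cancel, Nat.cast_succ, C_add, C_1]
    ring

theorem coeff_one_abelPoly (n : ℕ) :
    (abelPoly n : R[X]).coeff 1 = if n = 0 then 0 else (n : R) ^ (n - 1) := by
  cases n with
  | zero => simp [coeff_one]
  | succ n => rw [abelPoly_succ, coeff_X_mul, coeff_X_add_C_pow]; simp

variable [IsAddTorsionFree R]

theorem eq_of_derivative_eq_of_coeff_zero_eq {p q : R[X]} (hd : derivative p = derivative q)
    (h0 : p.coeff 0 = q.coeff 0) : p = q := by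
  have hd' : derivative (p - q) = 0 := by rw [derivative_sub, hd, sub_self]
  rw [← sub_eq_zero, eq_C_of_derivative_eq_zero hd', coeff_sub, h0, sub_self, map_zero]

theorem sum_antidiagonal_choose_mul_abelPoly (y : R) (n : ℕ) :
    ∑ p ∈ antidiagonal n, C (n.choose p.1 * (y + p.2) ^ p.2) * abelPoly p.1 =
      (X + C (y + n)) ^ n := by
  induction n with
  | zero => simp
  | succ n ih =>
    apply eq_of_derivative_eq_of_coeff_zero_eq
    · rw [derivative_sum, Nat.sum_antidiagonal_succ, derivative_X_add_C_pow]
      simp only [derivative_C_mul, abelPoly_zero, derivative_one, mul_zero, zero_add,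
        derivative_abelPoly_succ]
      calc _ = C ((n : R) + 1) * (∑ p ∈ antidiagonal n,
              C (n.choose p.1 * (y + p.2) ^ p.2) * abelPoly p.1).comp (X + 1) := by
            rw [sum_comp, mul_sum]
            refine sum_congr rfl fun p _ => ?_
            have := congr_arg (Nat.cast (R := R)) (Nat.add_one_mul_choose_eq n p.1).symm
            push_cast at this
            rw [mul_comp, C_comp, ← mul_assoc, ← mul_assoc, ← C_mul, ← C_mul]
            congr 2
            linear_combination (y + p.2) ^ p.2 * this
        _ = _ := by
            rw [ih]
            simp only [pow_comp, add_comp, X_comp, C_comp, Nat.add_sub_cancel, Nat.cast_succ,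
              C_add, C_1]
            ring
    · simp [coeff_zero_eq_eval_zero, eval_finsetSum, Nat.sum_antidiagonal_succ, abelPoly_succ]

theorem sum_antidiagonal_choose_mul_coeff_one_abelPoly (y : R) (n : ℕ) :
    ∑ p ∈ antidiagonal n, n.choose p.1 * (y + p.2) ^ p.2 * (abelPoly p.1 : R[X]).coeff 1 =
      n * (y + n) ^ (n - 1) := by
  have h := congr_arg (coeff · 1) (sum_antidiagonal_choose_mul_abelPoly y n)
  simp only [finsetSum_coeff, coeff_C_mul, coeff_X_add_C_pow, Nat.choose_one_right] at h
  exact h.trans (mul_comm _ _)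

end Polynomial

namespace PowerSeries

variable {K : Type*} [Field K]

noncomputable def egf (a : ℕ → K) : K⟦X⟧ := mk fun n => a n / n !

@[simp]
theorem coeff_egf (a : ℕ → K) (n : ℕ) : coeff n (egf a) = a n / n ! := coeff_mk _ _

theorem egf_mul [CharZero K] (a b : ℕ → K) :
    egf a * egf b = egf fun n => ∑ p ∈ antidiagonal n, n.choose p.1 * a p.1 * b p.2 := by
  ext n
  simp only [coeff_mul, coeff_egf, sum_div]
  refine sum_congr rfl fun ⟨i, j⟩ hij => ?_
  obtain rfl : i + j = n := HasAntidiagonal.mem_antidiagonal.mp hij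
  have : ((i + j)! : K) ≠ 0 := Nat.cast_ne_zero.mpr (Nat.factorial_ne_zero _)
  rw [Nat.cast_choose K (Nat.le_add_right i j), Nat.add_sub_cancel_left]
  field_simp

theorem derivative_egf [CharZero K] (a : ℕ → K) :
    d⁄dX K (egf a) = egf fun n => a (n + 1) := by
  ext n
  rw [coeff_derivative, coeff_egf, coeff_egf, Nat.factorial_succ]
  push_cast
  field_simp

variable (K) [CharZero K]

noncomputable def treeFunction : K⟦X⟧ := egf fun n => if n = 0 then 0 else (n : K) ^ (n - 1)

theorem treeFunction_mul_derivative :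
    treeFunction K * d⁄dX K (treeFunction K) = egf fun n => n * ((n : K) + 1) ^ (n - 1) := by
  rw [treeFunction, derivative_egf, egf_mul]
  congr 1
  funext n
  rw [add_comm (n : K), ← Polynomial.sum_antidiagonal_choose_mul_coeff_one_abelPoly]
  refine sum_congr rfl fun p _ => ?_
  simp only [Polynomial.coeff_one_abelPoly, Nat.add_one_ne_zero, if_false, Nat.add_sub_cancel,
    Nat.cast_succ]
  ring

theorem X_mul_derivative_treeFunction_sub :
    X * d⁄dX K (treeFunction K) - treeFunction K =
      X * egf fun n => n * ((n : K) + 1) ^ (n - 1) := by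
  rw [treeFunction, derivative_egf]
  ext (_ | _ | n)
  · rw [map_sub, coeff_zero_X_mul, coeff_zero_X_mul, coeff_egf]
    simp
  · simp [coeff_succ_X_mul]
  · have : (n : K) + 1 + 1 ≠ 0 := by norm_cast
    simp only [map_sub, coeff_succ_X_mul, coeff_egf, Nat.add_one_ne_zero, if_false,
      Nat.add_sub_cancel, Nat.factorial_succ]
    push_cast
    field_simp
    ring

end PowerSeries

open PowerSeries

/-- The tree generating function `y = ∑_{d≥1} d^(d-1)/d! x^d` satisfies the
differential equation `x y' - y = x y y'` (the form of
`(x² ∘ d/dx ∘ 1/x) y = (1/2) x d/dx y²`) as formal power series. -/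
theorem tree_generating_function_ODE :
    let y : PowerSeries ℚ :=
      PowerSeries.mk fun d => if d = 0 then 0 else (d : ℚ) ^ (d - 1) / d.factorial
    PowerSeries.X * PowerSeries.derivativeFun y - y =
      PowerSeries.X * y * PowerSeries.derivativeFun y := by
  intro y
  have hy : y = treeFunction ℚ := by
    ext n
    simp only [y, treeFunction, coeff_mk, coeff_egf]
    split_ifs <;> simp
  change X * d⁄dX ℚ y - y = X * y * d⁄dX ℚ y
  rw [hy, mul_assoc, treeFunction_mul_derivative, X_mul_derivative_treeFunction_sub]
end

section
/- The function F(z₁,z₂) = log((z₁-z₂)/(x(z₁)-x(z₂))) - (z₁^r + z₂^r), with x(z) = z·e^{-z^r}, satisfies the PDE (1/r)(z₁ ∂/∂z₁ + z₂ ∂/∂z₂) F = (x₁·z₁^r - x₂·z₂^r)/(x₁ - x₂) - (z₁^r + z₂^r), where xᵢ = x(zᵢ). -/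
/-!
Apply the Euler operator `z₁ ∂₁ + z₂ ∂₂` to `log (z₁ - z₂) - log (x₁ - x₂) - (z₁^r + z₂^r)`
term by term. The term `log (z₁ - z₂)` contributes
`z₁/(z₁ - z₂) + z₂/(z₂ - z₁) = 1`. Since `z x'(z) = x(z) (1 - r z^r)`, the term `log (x₁ - x₂)`
contributes `1 - r (x₁ z₁^r - x₂ z₂^r)/(x₁ - x₂)`, and `z₁^r + z₂^r` contributes `r (z₁^r + z₂^r)`.
Splitting the logarithm is only heuristic, but harmless: on the slit plane `log' = 1/w`, so only
the logarithmic derivative of the quotient enters. As `F02` is symmetric, the second partial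
derivative is the first one with the points swapped.
-/

/-- The `r`-Lambert parametrization `x(z) = z e^(-z^r)`. -/
noncomputable def xL (r : ℕ) (z : ℂ) : ℂ := z * Complex.exp (-z ^ r)

/-- The two-point function `F₀,₂(z₁,z₂) = log((z₁-z₂)/(x(z₁)-x(z₂))) - (z₁^r + z₂^r)`. -/
noncomputable def F02 (r : ℕ) (z₁ z₂ : ℂ) : ℂ :=
  Complex.log ((z₁ - z₂) / (xL r z₁ - xL r z₂)) - (z₁ ^ r + z₂ ^ r)

open Complex

lemma natCast_mul_mul_pow_sub_one {R : Type*} [CommSemiring R] (n : ℕ) (a : R) :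
    (n : R) * (a * a ^ (n - 1)) = n * a ^ n := by
  rcases n with _ | n
  · simp
  · rw [Nat.add_sub_cancel, ← pow_succ']

lemma hasDerivAt_xL (r : ℕ) (z : ℂ) :
    HasDerivAt (xL r) (exp (-z ^ r) * (1 - r * z ^ r)) z := by
  have h : HasDerivAt (xL r) (1 * exp (-z ^ r) + z * (exp (-z ^ r) * -(r * z ^ (r - 1)))) z :=
    (hasDerivAt_id' z).mul (hasDerivAt_pow r z).neg.cexp
  refine h.congr_deriv ?_
  linear_combination -exp (-z ^ r) * natCast_mul_mul_pow_sub_one r z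

lemma F02_comm (r : ℕ) (z₁ z₂ : ℂ) : F02 r z₁ z₂ = F02 r z₂ z₁ := by
  unfold F02
  rw [← neg_sub z₂, ← neg_sub (xL r z₂), neg_div_neg_eq, add_comm]

lemma hasDerivAt_F02_left {r : ℕ} {z₁ z₂ : ℂ} (hx : xL r z₁ ≠ xL r z₂)
    (hslit : (z₁ - z₂) / (xL r z₁ - xL r z₂) ∈ slitPlane) :
    HasDerivAt (fun w => F02 r w z₂)
      (1 / (z₁ - z₂) - exp (-z₁ ^ r) * (1 - r * z₁ ^ r) / (xL r z₁ - xL r z₂)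
        - r * z₁ ^ (r - 1)) z₁ := by
  have hdx : xL r z₁ - xL r z₂ ≠ 0 := sub_ne_zero.mpr hx
  have hdz : z₁ - z₂ ≠ 0 := sub_ne_zero.mpr (ne_of_apply_ne (xL r) hx)
  have hquot : HasDerivAt (fun w => (w - z₂) / (xL r w - xL r z₂))
      ((1 * (xL r z₁ - xL r z₂) - (z₁ - z₂) * (exp (-z₁ ^ r) * (1 - r * z₁ ^ r)))
        / (xL r z₁ - xL r z₂) ^ 2) z₁ :=
    ((hasDerivAt_id' z₁).sub_const z₂).div ((hasDerivAt_xL r z₁).sub_const (xL r z₂)) hdx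
  refine ((hquot.clog hslit).sub ((hasDerivAt_pow r z₁).add_const (z₂ ^ r))).congr_deriv ?_
  field_simp

lemma mul_deriv_F02_left {r : ℕ} {z₁ z₂ : ℂ} (hx : xL r z₁ ≠ xL r z₂)
    (hslit : (z₁ - z₂) / (xL r z₁ - xL r z₂) ∈ slitPlane) :
    z₁ * deriv (fun w => F02 r w z₂) z₁ =
      z₁ / (z₁ - z₂) - xL r z₁ * (1 - r * z₁ ^ r) / (xL r z₁ - xL r z₂) - r * z₁ ^ r := by
  rw [(hasDerivAt_F02_left hx hslit).deriv, ← natCast_mul_mul_pow_sub_one]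
  unfold xL
  ring

lemma mul_deriv_F02_right {r : ℕ} {z₁ z₂ : ℂ} (hx : xL r z₁ ≠ xL r z₂)
    (hslit : (z₁ - z₂) / (xL r z₁ - xL r z₂) ∈ slitPlane) :
    z₂ * deriv (fun w => F02 r z₁ w) z₂ =
      z₂ / (z₂ - z₁) - xL r z₂ * (1 - r * z₂ ^ r) / (xL r z₂ - xL r z₁) - r * z₂ ^ r := by
  simp_rw [F02_comm r z₁]
  rw [← neg_sub z₂, ← neg_sub (xL r z₂), neg_div_neg_eq] at hslit
  exact mul_deriv_F02_left hx.symm hslit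

theorem F02_satisfies_PDE_general (r : ℕ) (hr : 0 < r) (z₁ z₂ : ℂ)
    (hx : xL r z₁ ≠ xL r z₂)
    (hslit : (z₁ - z₂) / (xL r z₁ - xL r z₂) ∈ Complex.slitPlane) :
    (1 / (r : ℂ)) *
        (z₁ * deriv (fun w => F02 r w z₂) z₁ + z₂ * deriv (fun w => F02 r z₁ w) z₂) =
      (xL r z₁ * z₁ ^ r - xL r z₂ * z₂ ^ r) / (xL r z₁ - xL r z₂) -
        (z₁ ^ r + z₂ ^ r) := by
  have hr : (r : ℂ) ≠ 0 := Nat.cast_ne_zero.mpr hr.ne'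
  have hdx : xL r z₁ - xL r z₂ ≠ 0 := sub_ne_zero.mpr hx
  have hdz : z₁ - z₂ ≠ 0 := sub_ne_zero.mpr (ne_of_apply_ne (xL r) hx)
  rw [mul_deriv_F02_left hx hslit, mul_deriv_F02_right hx hslit,
    ← neg_sub z₁, ← neg_sub (xL r z₁)]
  field_simp
  ring

/-- `F₀,₂` satisfies the PDE
`(1/r)(z₁ ∂₁ + z₂ ∂₂) F = (x₁ z₁^r - x₂ z₂^r)/(x₁ - x₂) - (z₁^r + z₂^r)`. -/
theorem F02_satisfies_PDE (r : ℕ) (hr : 0 < r) (z₁ z₂ : ℂ) (hz : z₁ ≠ z₂)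
    (hx : xL r z₁ ≠ xL r z₂)
    (hslit : (z₁ - z₂) / (xL r z₁ - xL r z₂) ∈ Complex.slitPlane) :
    (1 / (r : ℂ)) *
        (z₁ * deriv (fun w => F02 r w z₂) z₁ + z₂ * deriv (fun w => F02 r z₁ w) z₂) =
      (xL r z₁ * z₁ ^ r - xL r z₂ * z₂ ^ r) / (xL r z₁ - xL r z₂) -
        (z₁ ^ r + z₂ ^ r) :=
  F02_satisfies_PDE_general r hr z₁ z₂ hx hslit
end
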